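/- For α, β with α+β+1 > 0, integers 0 ≤ j ≤ i, and all x: Σ_{k=j}^{i} [(α+β+2k+1)/(α+β+k+j+1)_{i-j+1}] · P_{i-k}^{(-α-i-1,-β-i-1)}(-x) · P_{k-j}^{(α+j,β+j)}(x) = x^{i-j}/(i-j)!. -/

import Mathlib

open Finset Real

/-- Pochhammer symbol (rising factorial) `(a)_k`. -/
noncomputable def poch (a : ℝ) (k : ℕ) : ℝ := (ascPochhammer ℝ k).eval a

/-- Classical Laguerre polynomial `L_n^{(α)}(x)` for arbitrary parameter α. -/
noncomputable def lag (α : ℝ) (n : ℕ) (x : ℝ) : ℝ :=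
  ∑ k ∈ Finset.range (n + 1),
    (-1 : ℝ) ^ k * (poch (α + k + 1) (n - k) / (Nat.factorial (n - k))) *
      x ^ k / (Nat.factorial k)

/-- Classical Jacobi polynomial `P_n^{(α,β)}(x)` for arbitrary parameters. -/
noncomputable def jac (α β : ℝ) (n : ℕ) (x : ℝ) : ℝ :=
  ∑ k ∈ Finset.range (n + 1),
    (poch ((n : ℝ) + α + β + 1) k / (Nat.factorial k)) *
      (poch (α + k + 1) (n - k) / (Nat.factorial (n - k))) * ((x - 1) / 2) ^ k

/-- Generalized binomial coefficient `C(x, k)`. -/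
noncomputable def genBinom (x : ℝ) (k : ℕ) : ℝ :=
  (∏ j ∈ Finset.range k, (x - j)) / (Nat.factorial k)

/-- Charlier polynomial `C_n^{(a)}(x)`. -/
noncomputable def charlier (a : ℝ) (n : ℕ) (x : ℝ) : ℝ :=
  ∑ k ∈ Finset.range (n + 1), genBinom x k * (-a) ^ (n - k) / (Nat.factorial (n - k))

/-! Expand both Jacobi polynomials in powers of `y = (x - 1) / 2` and `z = (-x - 1) / 2`, so that
`x = y - z`. Writing the summation index as `n = r + t` and `N = m - r - s`, the coefficient of
`z ^ s * y ^ r` is `(-1) ^ s (A + r + 1)_N / (r! s!)` times an alternating sum in `t` which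
telescopes to `0` unless `N = 0`. Only the terms with `r + s = m` survive, and they add up to
`(y - z) ^ m / m!` by the binomial theorem. The theorem is the case `A = α + j`, `B = β + j`,
`m = i - j`. -/

open scoped Nat

lemma poch_zero (a : ℝ) : poch a 0 = 1 := by simp [poch]

lemma poch_succ (a : ℝ) (k : ℕ) : poch a (k + 1) = poch a k * (a + k) :=
  ascPochhammer_succ_eval k a

lemma poch_succ_left (a : ℝ) (k : ℕ) : poch a (k + 1) = a * poch (a + 1) k := by
  simp [poch, ascPochhammer_succ_left, Polynomial.eval_comp]

lemma poch_pos {a : ℝ} (ha : 0 < a) (k : ℕ) : 0 < poch a k := ascPochhammer_pos k a ha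

lemma poch_add (a : ℝ) (k l : ℕ) : poch a (k + l) = poch a k * poch (a + k) l := by
  simp [poch, ← ascPochhammer_mul, Polynomial.eval_comp]

lemma poch_neg (a : ℝ) (k : ℕ) : poch (-a) k = (-1) ^ k * poch (a - k + 1) k := by
  rw [poch, ascPochhammer_eval_neg_eq_descPochhammer, descPochhammer_eval_eq_ascPochhammer, poch]

lemma neg_one_pow_mul_div_poch_eq_sub {u : ℝ} (hu : 0 < u) {N t : ℕ} (hN : N ≠ 0)
    (ht : t ≤ N) :
    (-1) ^ (N - t) * (u + 2 * t) / (poch (u + t) (N + 1) * t ! * (N - t)!) =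
      (-1) ^ (N + (t + 1) + 1) * (t + 1 : ℕ) * N.choose (t + 1) /
          (N * N ! * poch (u + (t + 1 : ℕ)) N) -
        (-1) ^ (N + t + 1) * t * N.choose t / (N * N ! * poch (u + t) N) := by
  have hsign : (-1 : ℝ) ^ (N - t) = (-1) ^ (N + t) := by
    rw [show N + t = (N - t) + 2 * t by omega, pow_add, pow_mul]; norm_num
  have hchoose : (N.choose (t + 1) : ℝ) * (t + 1 : ℕ) = N.choose t * (N - t) := by
    rw [← Nat.cast_sub ht]; exact_mod_cast Nat.choose_succ_right_eq N t
  have hfact : (N ! : ℝ) = N.choose t * t ! * (N - t)! := by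
    exact_mod_cast (Nat.choose_mul_factorial_mul_factorial ht).symm
  have hsucc : poch (u + t) (N + 1) = poch (u + t) N * (u + t + N) := poch_succ _ _
  have hsucc' : poch (u + t) (N + 1) = (u + t) * poch (u + (t + 1 : ℕ)) N := by
    rw [poch_succ_left, Nat.cast_succ, add_assoc]
  have h0 := poch_pos (a := u + t) (by positivity) N
  have h1 := poch_pos (a := u + (t + 1 : ℕ)) (by positivity) N
  have h2 := poch_pos (a := u + t) (by positivity) (N + 1)
  have hC : (0 : ℝ) < N.choose t := by exact_mod_cast Nat.choose_pos ht
  rw [hsign, hfact, ← add_assoc, pow_succ]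
  field_simp
  linear_combination (-(-1) ^ (N + t) * poch (u + t) (N + 1) * poch (u + t) N) * hchoose -
    ((-1) ^ (N + t) * poch (u + t) N * N.choose t * (N - t)) * hsucc' -
    ((-1) ^ (N + t) * t * N.choose t * poch (u + (t + 1 : ℕ)) N) * hsucc

lemma sum_range_neg_one_pow_mul_div_poch {u : ℝ} (hu : 0 < u) (N : ℕ) :
    ∑ t ∈ range (N + 1),
        (-1) ^ (N - t) * (u + 2 * t) / (poch (u + t) (N + 1) * t ! * (N - t)!) =
      if N = 0 then 1 else 0 := by
  rcases eq_or_ne N 0 with rfl | hN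
  · simp [poch_succ, poch_zero, hu.ne']
  · rw [if_neg hN, sum_congr rfl fun t ht =>
      neg_one_pow_mul_div_poch_eq_sub hu hN (Nat.lt_succ_iff.mp (mem_range.mp ht)),
      sum_range_sub fun t : ℕ =>
        (-1 : ℝ) ^ (N + t + 1) * t * N.choose t / (N * N ! * poch (u + t) N)]
    simp [Nat.choose_succ_self]

noncomputable def jacCoeff (α β : ℝ) (n k : ℕ) : ℝ :=
  poch (n + α + β + 1) k / k ! * (poch (α + k + 1) (n - k) / (n - k)!)

lemma jac_eq_sum_jacCoeff (α β : ℝ) (n : ℕ) (x : ℝ) :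
    jac α β n x = ∑ k ∈ range (n + 1), jacCoeff α β n k * ((x - 1) / 2) ^ k :=
  rfl

lemma jacCoeff_mul_jacCoeff {A B : ℝ} (hAB : 0 < A + B + 1) {m r s t : ℕ}
    (h : r + s + t ≤ m) :
    (A + B + 2 * (r + t : ℕ) + 1) / poch (A + B + (r + t : ℕ) + 1) (m + 1) *
        (jacCoeff (-A - m - 1) (-B - m - 1) (m - (r + t)) s * jacCoeff A B (r + t) r) =
      (-1) ^ s * poch (A + r + 1) (m - r - s) / (r ! * s !) *
        ((-1) ^ (m - r - s - t) * (A + B + 2 * r + 1 + 2 * t) /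
          (poch (A + B + 2 * r + 1 + t) (m - r - s + 1) * t ! * (m - r - s - t)!)) := by
  obtain ⟨N, rfl⟩ : ∃ N, m = r + s + N := ⟨m - r - s, by omega⟩
  have ht : t ≤ N := by omega
  rw [show r + s + N - (r + t) = N - t + s by omega, show r + s + N - r - s = N by omega]
  have hD₁ :
      poch ((N - t + s : ℕ) + (-A - (r + s + N : ℕ) - 1) + (-B - (r + s + N : ℕ) - 1) + 1) s =
        (-1) ^ s * poch (A + B + 2 * r + 1 + t + (N + 1 : ℕ)) s := by
    convert poch_neg (A + B + 2 * r + N + t + s + 1) s using 3 <;>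
      push_cast [Nat.cast_sub ht] <;> ring
  have hD₂ : poch (-A - (r + s + N : ℕ) - 1 + s + 1) (N - t + s - s) =
      (-1) ^ (N - t) * poch (A + r + 1 + t) (N - t) := by
    rw [Nat.add_sub_cancel]
    convert poch_neg (A + r + N) (N - t) using 3 <;> push_cast [Nat.cast_sub ht] <;> ring
  have hE : poch ((r + t : ℕ) + A + B + 1) r = poch (A + B + (r + t : ℕ) + 1) r := by
    congr 1; ring
  have hden : poch (A + B + (r + t : ℕ) + 1) (r + s + N + 1) =
      poch (A + B + (r + t : ℕ) + 1) r *
        (poch (A + B + 2 * r + 1 + t) (N + 1) *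
          poch (A + B + 2 * r + 1 + t + (N + 1 : ℕ)) s) := by
    rw [show r + s + N + 1 = r + ((N + 1) + s) by omega, poch_add,
      show A + B + ((r + t : ℕ) : ℝ) + 1 + r = A + B + 2 * r + 1 + t by push_cast; ring,
      poch_add]
  have hnum : poch (A + r + 1) N = poch (A + r + 1) t * poch (A + r + 1 + t) (N - t) := by
    rw [← poch_add, Nat.add_sub_cancel' ht]
  have hr₀ : (0 : ℝ) ≤ r := r.cast_nonneg
  have ht₀ : (0 : ℝ) ≤ t := t.cast_nonneg
  have : 0 < poch (A + B + (r + t : ℕ) + 1) r := poch_pos (by push_cast; linarith) r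
  have : 0 < poch (A + B + 2 * r + 1 + t) (N + 1) := poch_pos (by linarith) (N + 1)
  have : 0 < poch (A + B + 2 * r + 1 + t + (N + 1 : ℕ)) s := poch_pos (by push_cast; linarith) s
  simp only [jacCoeff]
  rw [hD₁, hD₂, hE, hden, hnum, Nat.add_sub_cancel_left, Nat.add_sub_cancel]
  field_simp
  push_cast
  ring

lemma sum_range_triple_reindex {M : Type*} [AddCommMonoid M] (m : ℕ)
    (f : ℕ → ℕ → ℕ → M) :
    ∑ n ∈ range (m + 1), ∑ s ∈ range (m - n + 1), ∑ r ∈ range (n + 1), f n s r =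
      ∑ r ∈ range (m + 1), ∑ s ∈ range (m - r + 1), ∑ t ∈ range (m - r - s + 1),
        f (r + t) s r := by
  calc _ = ∑ n ∈ range (m + 1), ∑ r ∈ range (n + 1), ∑ s ∈ range (m - n + 1), f n s r :=
        sum_congr rfl fun n _ => sum_comm
    _ = ∑ r ∈ range (m + 1), ∑ n ∈ Icc r m, ∑ s ∈ range (m - n + 1), f n s r :=
        sum_comm' fun n r => by simp only [mem_range, mem_Icc]; omega
    _ = ∑ r ∈ range (m + 1), ∑ s ∈ range (m - r + 1), ∑ n ∈ Icc r (m - s), f n s r :=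
        sum_congr rfl fun r hr => sum_comm' fun n s => by
          simp only [mem_range, mem_Icc] at hr ⊢; omega
    _ = _ := by
        refine sum_congr rfl fun r hr => sum_congr rfl fun s hs => ?_
        rw [mem_range] at hr hs
        rw [← Ico_add_one_right_eq_Icc, sum_Ico_eq_sum_range,
          show m - s + 1 - r = m - r - s + 1 by omega]

theorem sum_jac_reflect_mul_jac {A B : ℝ} (hAB : 0 < A + B + 1) (m : ℕ) (x : ℝ) :
    ∑ n ∈ range (m + 1), (A + B + 2 * n + 1) / poch (A + B + n + 1) (m + 1) *
        jac (-A - m - 1) (-B - m - 1) (m - n) (-x) * jac A B n x = x ^ m / m ! := by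
  set y := (x - 1) / 2
  set z := (-x - 1) / 2
  have hx : x = y + -z := by ring
  calc _ = ∑ n ∈ range (m + 1), ∑ s ∈ range (m - n + 1), ∑ r ∈ range (n + 1),
        (A + B + 2 * n + 1) / poch (A + B + n + 1) (m + 1) *
          (jacCoeff (-A - m - 1) (-B - m - 1) (m - n) s * jacCoeff A B n r) * (z ^ s * y ^ r) := by
        refine sum_congr rfl fun n _ => ?_
        rw [jac_eq_sum_jacCoeff, jac_eq_sum_jacCoeff, mul_assoc, sum_mul_sum, mul_sum]
        exact sum_congr rfl fun s _ => by rw [mul_sum]; exact sum_congr rfl fun r _ => by ring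
    _ = ∑ r ∈ range (m + 1), ∑ s ∈ range (m - r + 1),
        (-1) ^ s * poch (A + r + 1) (m - r - s) / (r ! * s !) *
          (if m - r - s = 0 then 1 else 0) * (z ^ s * y ^ r) := by
        rw [sum_range_triple_reindex]
        refine sum_congr rfl fun r hr => sum_congr rfl fun s hs => ?_
        rw [mem_range] at hr hs
        have hu : 0 < A + B + 2 * r + 1 := by linarith [r.cast_nonneg (α := ℝ)]
        rw [← sum_mul, ← sum_range_neg_one_pow_mul_div_poch hu, mul_sum]
        refine congrArg (· * _) (sum_congr rfl fun t ht => ?_)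
        exact jacCoeff_mul_jacCoeff hAB (by rw [mem_range] at ht; omega)
    _ = ∑ r ∈ range (m + 1), y ^ r * (-z) ^ (m - r) * m.choose r / m ! := by
        refine sum_congr rfl fun r hr => ?_
        have hr : r ≤ m := Nat.lt_succ_iff.mp (mem_range.mp hr)
        rw [sum_eq_single_of_mem (m - r) (by simp only [mem_range]; omega) fun s hs _ => by
          rw [if_neg (by rw [mem_range] at hs; omega)]; ring]
        rw [Nat.cast_choose ℝ hr, neg_pow z, Nat.sub_self, poch_zero, if_pos rfl]
        field_simp
    _ = x ^ m / m ! := by rw [← sum_div, hx, add_pow]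

theorem stmt5 (α β : ℝ) (h : α + β + 1 > 0) (i j : ℕ) (hij : j ≤ i) (x : ℝ) :
    ∑ k ∈ Finset.Icc j i,
        (α + β + 2 * k + 1) / poch (α + β + k + j + 1) (i - j + 1) *
          jac (-α - i - 1) (-β - i - 1) (i - k) (-x) * jac (α + j) (β + j) (k - j) x =
      x ^ (i - j) / (Nat.factorial (i - j)) := by
  obtain ⟨m, rfl⟩ := Nat.exists_eq_add_of_le hij
  have hAB : 0 < (α + j) + (β + j) + 1 := by linarith [j.cast_nonneg (α := ℝ)]
  rw [Nat.add_sub_cancel_left, ← sum_jac_reflect_mul_jac hAB m x, ← Ico_add_one_right_eq_Icc,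
    sum_Ico_eq_sum_range, show j + m + 1 - j = m + 1 by omega]
  refine sum_congr rfl fun n _ => ?_
  rw [Nat.add_sub_add_left, Nat.add_sub_cancel_left]
  push_cast
  ring_nf
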